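/- Let A be a pseudo-BCI-algebra. The map γ : x ↦ x → 1 is a homomorphism from (A, →, ⇝, 1) to (G_A, ⇝, →, 1), i.e., γ(x → y) = γ(x) ⇝ γ(y) and γ(x ⇝ y) = γ(x) → γ(y) and γ(1) = 1. -/
import Mathlib


class PseudoBCI (A : Type*) where
  ar : A → A → A
  sq : A → A → A
  one : A
  ax1 : ∀ x y z : A, sq (ar x y) (sq (ar y z) (ar x z)) = one
  ax2 : ∀ x y z : A, ar (sq x y) (ar (sq y z) (sq x z)) = one
  ax3 : ∀ x : A, ar one x = x
  ax4 : ∀ x : A, sq one x = x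
  ax5 : ∀ x y : A, ar x y = one → ar y x = one → x = y

open PseudoBCI

section Aux
variable {A : Type*} [PseudoBCI A]

lemma refl_ar (x : A) : ar x x = one := by
  have h := ax2 (one : A) one x
  simp only [ax4, ax3] at h
  exact h

lemma refl_sq (x : A) : sq x x = one := by
  have h := ax1 (one : A) one x
  simp only [ax3, ax4] at h
  exact h

lemma le3 (x z : A) : sq x (sq (ar x z) z) = one := by
  have h := ax1 (one : A) x z
  rw [ax3, ax3] at h
  exact h

lemma le4 (x z : A) : ar x (ar (sq x z) z) = one := by
  have h := ax2 (one : A) x z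
  rw [ax4, ax4] at h
  exact h

lemma sq_of_ar {x y : A} (h : ar x y = one) : sq x y = one := by
  have h3 := le3 x y
  rw [h, ax4] at h3
  exact h3

lemma ar_of_sq {x y : A} (h : sq x y = one) : ar x y = one := by
  have h4 := le4 x y
  rw [h, ax3] at h4
  exact h4

lemma tr {x y z : A} (h1 : ar x y = one) (h2 : ar y z = one) : ar x z = one := by
  have h := ax1 x y z
  rw [h1, h2, ax4, ax4] at h
  exact h

lemma L9 {x y : A} (h : ar x y = one) (z : A) : ar (ar y z) (ar x z) = one := by
  have h1 := ax1 x y z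
  rw [h, ax4] at h1
  exact ar_of_sq h1

lemma L10 {x y : A} (h : sq x y = one) (z : A) : sq (sq y z) (sq x z) = one := by
  have h1 := ax2 x y z
  rw [h, ax3] at h1
  exact sq_of_ar h1

lemma L11 {x y : A} (h : ar x y = one) (z : A) : ar (ar z x) (ar z y) = one := by
  have h1 := ax1 z x y
  rw [h, ax4] at h1
  exact ar_of_sq h1

lemma L12 {x y : A} (h : sq x y = one) (z : A) : ar (sq z x) (sq z y) = one := by
  have h1 := ax2 z x y
  rw [h, ax3] at h1
  exact h1

lemma L14 {a b c : A} (h : ar a (ar b c) = one) : ar b (sq a c) = one := by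
  have h1 := L10 (sq_of_ar h) c
  have h2 := le3 b c
  exact tr (ar_of_sq h2) (ar_of_sq h1)

lemma L14' {a b c : A} (h : ar a (sq b c) = one) : ar b (ar a c) = one := by
  have h1 := L9 h c
  have h2 := le4 b c
  exact tr h2 h1

lemma exch (x y z : A) : ar x (sq y z) = sq y (ar x z) := by
  apply ax5
  · have h1 := ax1 x (sq y z) z
    have h2 := le4 y z
    have h3 := L10 (sq_of_ar h2) (ar x z)
    exact tr (ar_of_sq h1) (ar_of_sq h3)
  · have h1 := ax2 y (ar x z) z
    have h2 := le3 x z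
    have h3 := L9 (ar_of_sq h2) (sq y z)
    exact tr h1 h3

lemma ar_one_eq_sq_one (x : A) : ar x one = sq x one := by
  have h := exch x x x
  rw [refl_ar, refl_sq] at h
  exact h

lemma gA {x y : A} (h : ar x y = one) : ar (ar y one) (ar x one) = one := L9 h one

lemma g1 (x y : A) : ar (ar x y) one = sq (ar x one) (ar y one) := by
  apply ax5
  · -- γ(x→y) ≤ γx⇝γy
    have h1 := ax1 x one y
    rw [ax3] at h1
    have h1' := ar_of_sq h1
    have h2 := le3 (ar x y) one
    have h3 := L12 h2 y
    have h4 := tr h1' h3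
    rw [← ar_one_eq_sq_one (ar (ar x y) one), ← exch (ar (ar x y) one) y one,
        ← ar_one_eq_sq_one y] at h4
    exact L14 h4
  · -- γx⇝γy ≤ γ(x→y)
    have k := ax2 (ar x one) (ar y one) (ar x one)
    rw [refl_sq] at k
    have c := ax1 x y one
    have c' := ar_of_sq c
    exact tr k (gA c')

lemma g2 (x y : A) : ar (sq x y) one = ar (ar x one) (ar y one) := by
  apply ax5
  · -- γ(x⇝y) ≤ γx→γy
    have h1 := ax2 x one y
    rw [ax4, ← ar_one_eq_sq_one x] at h1
    have h2 := ar_of_sq (le3 (sq x y) one)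
    have h3 := L11 h2 y
    have h4 := tr h1 h3
    rw [exch y (ar (sq x y) one) one] at h4
    exact L14' h4
  · -- γx→γy ≤ γ(x⇝y)
    have k := ax1 (ar x one) (ar y one) (ar x one)
    rw [refl_ar] at k
    have k' := ar_of_sq k
    rw [← ar_one_eq_sq_one (ar (ar y one) (ar x one))] at k'
    have c := ax2 x y one
    rw [← ar_one_eq_sq_one y, ← ar_one_eq_sq_one x] at c
    exact tr k' (gA c)

end Aux

theorem stmt12 {A : Type*} [PseudoBCI A] :
    (∀ x y : A, ar (ar x y) one = sq (ar x one) (ar y one)) ∧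
    (∀ x y : A, ar (sq x y) one = ar (ar x one) (ar y one)) ∧
    ar (one : A) one = one := ⟨g1, g2, ax3 one⟩
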